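/- Let p be a prime number and let Y be a nontrivial additive subgroup of ℚ with p·Y = Y. Let n ≥ 2, let k_1, …, k_n be positive integers and ε_1, …, ε_n ∈ {−1, 1}, set r_j = ε_j·p^{−k_j}, and assume r_1² + ⋯ + r_n² = 1. Let σ ≥ 0 and let E be a subgroup of Y such that for every y ∈ Y, y ∈ E if and only if p·y ∈ E. Define f : Y → ℝ by f(y) = exp(−σ y²) for y ∈ E and f(y) = 0 for y ∉ E. Then f is a positive definite function on Y with f(0) = 1, and f(y) = ∏_{j=1}^n f(r_j·y) for all y ∈ Y. -/

import Mathlib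

open scoped BigOperators

/-- A function `f : G → ℂ` on an additive abelian group is positive definite if every
quadratic form `∑ cᵢ c̄ⱼ f(yᵢ - yⱼ)` is a nonnegative real number. -/
def IsPositiveDefinite {G : Type*} [AddCommGroup G] (f : G → ℂ) : Prop :=
  ∀ (n : ℕ) (y : Fin n → G) (c : Fin n → ℂ),
    ∃ t : ℝ, 0 ≤ t ∧ ∑ i, ∑ j, c i * (starRingEnd ℂ) (c j) * f (y i - y j) = (t : ℂ)

/-- The image of a subgroup of `ℚ` under multiplication by a rational number. -/
def ratSMul (r : ℚ) (Y : AddSubgroup ℚ) : Set ℚ := (fun y => r * y) '' (Y : Set ℚ)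


/-! The Gaussian kernel `exp (-σ (x - y)²) = exp (-σ x²) exp (-σ y²) exp (2σ x y)` is positive
definite because the power series of `exp (2σ x y)` has nonnegative coefficients and each
`(x y) ^ m` is a rank-one kernel. Cutting a positive definite function down to a subgroup `E`
keeps it positive definite: split the coefficients along the cosets of `E`. Since
`p ^ k * (±p ^ (-k) * y) = ±y` and `E` is stable under multiplication and division by `p` inside
`Y`, we get `rⱼ y ∈ E ↔ y ∈ E`; so both sides of the functional equation vanish off `E`, and on
`E` it reduces to `∑ rⱼ² = 1`. -/

open Finset ComplexConjugate
open scoped ComplexOrder Nat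

section PositiveDefinite

variable {G H : Type*} [AddCommGroup G] [AddCommGroup H]

lemma isPositiveDefinite_iff_nonneg {f : G → ℂ} :
    IsPositiveDefinite f ↔
      ∀ (n : ℕ) (y : Fin n → G) (c : Fin n → ℂ), 0 ≤ ∑ i, ∑ j, c i * conj (c j) * f (y i - y j) := by
  refine forall₃_congr fun n y c => ⟨?_, fun h => ⟨_, Complex.eq_coe_norm_of_nonneg h ▸ norm_nonneg _,
    Complex.eq_coe_norm_of_nonneg h⟩⟩
  rintro ⟨t, ht, heq⟩
  exact heq ▸ Complex.zero_le_real.2 ht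

lemma IsPositiveDefinite.comp_addMonoidHom {f : H → ℂ} (hf : IsPositiveDefinite f) (g : G →+ H) :
    IsPositiveDefinite (f ∘ g) := by
  intro n y c
  simpa only [Function.comp_apply, map_sub] using hf n (g ∘ y) c

lemma IsPositiveDefinite.indicator {f : G → ℂ} (hf : IsPositiveDefinite f) (K : AddSubgroup G) :
    IsPositiveDefinite ((K : Set G).indicator f) := by
  classical
  rw [isPositiveDefinite_iff_nonneg] at hf ⊢
  intro n y c
  set q : G → G ⧸ K := QuotientAddGroup.mk
  let cz : G ⧸ K → Fin n → ℂ := fun z i => if q (y i) = z then c i else 0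
  have hsplit : ∀ i j, c i * conj (c j) * (K : Set G).indicator f (y i - y j) =
      ∑ z ∈ univ.image (q ∘ y), cz z i * conj (cz z j) * f (y i - y j) := by
    intro i j
    simp only [cz, apply_ite conj, map_zero, ite_mul, mul_ite, zero_mul, mul_zero]
    have hj : q (y j) ∈ univ.image (q ∘ y) := mem_image_of_mem _ (mem_univ j)
    rw [sum_ite_eq, if_pos hj]
    by_cases h : y i - y j ∈ K <;>
      simp [Set.indicator, h, q, QuotientAddGroup.eq_iff_sub_mem]
  calc (0 : ℂ) ≤ ∑ z ∈ univ.image (q ∘ y), ∑ i, ∑ j, cz z i * conj (cz z j) * f (y i - y j) :=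
        sum_nonneg fun z _ => hf n y (cz z)
    _ = _ := by
        simp only [hsplit]
        rw [sum_comm]
        exact sum_congr rfl fun i _ => sum_comm

end PositiveDefinite

section Gaussian

lemma sum_sum_mul_conj_mul_pow_nonneg {n : ℕ} (d : Fin n → ℂ) (x : Fin n → ℝ) (m : ℕ) :
    0 ≤ ∑ i, ∑ j, d i * conj (d j) * ((x i : ℂ) * x j) ^ m := by
  have h : ∑ i, ∑ j, d i * conj (d j) * ((x i : ℂ) * x j) ^ m =
      (∑ i, d i * (x i : ℂ) ^ m) * conj (∑ j, d j * (x j : ℂ) ^ m) := by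
    simp only [map_sum, map_mul, map_pow, Complex.conj_ofReal, sum_mul_sum]
    exact sum_congr rfl fun i _ => sum_congr rfl fun j _ => by ring
  exact h ▸ mul_star_self_nonneg _

lemma sum_sum_mul_conj_mul_exp_nonneg {n : ℕ} {a : ℝ} (ha : 0 ≤ a) (d : Fin n → ℂ)
    (x : Fin n → ℝ) : 0 ≤ ∑ i, ∑ j, d i * conj (d j) * Complex.exp ((a : ℂ) * x i * x j) := by
  have hexp : ∀ i j, HasSum (fun m : ℕ => d i * conj (d j) * (((a : ℂ) * x i * x j) ^ m / m !))
      (d i * conj (d j) * Complex.exp ((a : ℂ) * x i * x j)) := fun i j => by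
    rw [Complex.exp_eq_exp_ℂ]
    exact (NormedSpace.expSeries_div_hasSum_exp ((a : ℂ) * x i * x j)).mul_left _
  refine (hasSum_sum fun i _ => hasSum_sum fun j _ => hexp i j).nonneg fun m => ?_
  have hterm : ∀ i j, d i * conj (d j) * (((a : ℂ) * x i * x j) ^ m / m !) =
      (a : ℂ) ^ m / m ! * (d i * conj (d j) * ((x i : ℂ) * x j) ^ m) := fun i j => by ring
  simp only [hterm, ← mul_sum]
  exact mul_nonneg (by positivity) (sum_sum_mul_conj_mul_pow_nonneg d x m)

lemma isPositiveDefinite_exp_neg_mul_sq {σ : ℝ} (hσ : 0 ≤ σ) :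
    IsPositiveDefinite fun x : ℝ => (Real.exp (-σ * x ^ 2) : ℂ) := by
  rw [isPositiveDefinite_iff_nonneg]
  intro n x c
  have hsplit : ∀ i j, Real.exp (-σ * (x i - x j) ^ 2) =
      Real.exp (-σ * x i ^ 2) * Real.exp (-σ * x j ^ 2) * Real.exp (2 * σ * x i * x j) := by
    intro i j
    rw [← Real.exp_add, ← Real.exp_add]
    ring_nf
  convert sum_sum_mul_conj_mul_exp_nonneg (by positivity : 0 ≤ 2 * σ)
    (fun i => c i * Real.exp (-σ * x i ^ 2)) x using 3 with i _ j _
  rw [hsplit]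
  simp only [map_mul, Complex.conj_ofReal]
  push_cast
  ring

end Gaussian

section DivisionStable

variable {Y E : AddSubgroup ℚ} {p : ℕ}

lemma pow_mul_mem_iff_of_mul_mem_iff (hEp : ∀ y ∈ Y, (y ∈ E ↔ (p : ℚ) * y ∈ E)) (m : ℕ) {y : ℚ}
    (hy : y ∈ Y) : (p : ℚ) ^ m * y ∈ E ↔ y ∈ E := by
  induction m generalizing y with
  | zero => simp
  | succ m ih =>
    have hpy : (p : ℚ) * y ∈ Y := by simpa [nsmul_eq_mul] using Y.nsmul_mem hy p
    rw [pow_succ, mul_assoc, ih hpy, hEp y hy]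

lemma sign_mul_zpow_mul_mem_iff (hp : p ≠ 0) (hEp : ∀ y ∈ Y, (y ∈ E ↔ (p : ℚ) * y ∈ E))
    {ε : ℤ} (hε : ε = 1 ∨ ε = -1) (k : ℕ) {y : ℚ} (hy : (ε : ℚ) * (p : ℚ) ^ (-(k : ℤ)) * y ∈ Y) :
    (ε : ℚ) * (p : ℚ) ^ (-(k : ℤ)) * y ∈ E ↔ y ∈ E := by
  have hpk : (p : ℚ) ^ k * ((ε : ℚ) * (p : ℚ) ^ (-(k : ℤ)) * y) = ε * y := by
    rw [zpow_neg, zpow_natCast]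
    field_simp
  rw [← pow_mul_mem_iff_of_mul_mem_iff hEp k hy, hpk]
  rcases hε with rfl | rfl <;> simp [neg_mem_iff]

end DivisionStable

lemma exp_neg_mul_sq_eq_prod {ι : Type*} (s : Finset ι) {r : ι → ℝ} (hr : ∑ j ∈ s, r j ^ 2 = 1)
    (σ y : ℝ) : Real.exp (-σ * y ^ 2) = ∏ j ∈ s, Real.exp (-σ * (r j * y) ^ 2) := by
  have hterm : ∀ j, -σ * (r j * y) ^ 2 = r j ^ 2 * (-σ * y ^ 2) := fun j => by ring
  rw [← Real.exp_sum]
  simp only [hterm, ← sum_mul, hr, one_mul]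

theorem gauss_haar_satisfies_polya_equation_general
    (p : ℕ) (hp : p.Prime) (Y : AddSubgroup ℚ)
    (n : ℕ) (hn : 2 ≤ n) (k : Fin n → ℕ)
    (ε : Fin n → ℤ) (hε : ∀ j, ε j = 1 ∨ ε j = -1)
    (r : Fin n → ℚ) (hr : ∀ j, r j = (ε j : ℚ) * (p : ℚ) ^ (-(k j : ℤ)))
    (hsum : ∑ j, (r j) ^ 2 = 1)
    (σ : ℝ) (hσ : 0 ≤ σ)
    (E : AddSubgroup ℚ)
    (hEp : ∀ y : ℚ, y ∈ Y → (y ∈ E ↔ (p : ℚ) * y ∈ E))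
    (f : Y → ℝ)
    (hfE : ∀ y : Y, (y : ℚ) ∈ E → f y = Real.exp (-σ * (((y : ℚ) : ℝ)) ^ 2))
    (hf0 : ∀ y : Y, (y : ℚ) ∉ E → f y = 0)
    (hmem : ∀ (j : Fin n) (y : Y), r j * (y : ℚ) ∈ Y) :
    IsPositiveDefinite (fun y : Y => (f y : ℂ)) ∧ f 0 = 1 ∧
      ∀ y : Y, f y = ∏ j, f ⟨r j * (y : ℚ), hmem j y⟩ := by
  have hrE : ∀ j (y : Y), r j * (y : ℚ) ∈ E ↔ (y : ℚ) ∈ E := fun j y => by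
    have hy := hmem j y
    rw [hr j] at hy ⊢
    exact sign_mul_zpow_mul_mem_iff hp.ne_zero hEp (hε j) (k j) hy
  have hf : (fun y : Y => (f y : ℂ)) = (E.addSubgroupOf Y : Set Y).indicator
      ((fun x : ℝ => (Real.exp (-σ * x ^ 2) : ℂ)) ∘ ((Rat.castHom ℝ : ℚ →+ ℝ).comp Y.subtype)) := by
    funext y
    by_cases hy : (y : ℚ) ∈ E <;> simp [Set.indicator, AddSubgroup.mem_addSubgroupOf, hy, hfE, hf0]
  refine ⟨?_, by simpa using hfE 0 E.zero_mem, fun y => ?_⟩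
  · rw [hf]
    exact ((isPositiveDefinite_exp_neg_mul_sq hσ).comp_addMonoidHom _).indicator _
  by_cases hy : (y : ℚ) ∈ E
  · rw [hfE y hy, prod_congr rfl fun j _ => hfE _ ((hrE j y).2 hy)]
    push_cast
    exact exp_neg_mul_sq_eq_prod _ (by exact_mod_cast hsum) σ _
  · rw [hf0 y hy]
    exact (prod_eq_zero (mem_univ (⟨0, by omega⟩ : Fin n)) (hf0 _ fun h => hy ((hrE _ y).1 h))).symm

/-- Dual form of the converse statement of Remark 2.9: the Gauss–Haar functions
`f = exp(-σ y²)` on `E`, `f = 0` off `E` (with `E` stable under division by `p`) are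
positive definite solutions of the Pólya functional equation with coefficients
`rⱼ = ± p^{-kⱼ}`; hence the class characterized in the main theorem cannot be narrowed. -/
theorem gauss_haar_satisfies_polya_equation
    (p : ℕ) (hp : p.Prime) (Y : AddSubgroup ℚ) (hY : Y ≠ ⊥)
    (hpY : ratSMul (p : ℚ) Y = (Y : Set ℚ))
    (n : ℕ) (hn : 2 ≤ n) (k : Fin n → ℕ) (hk : ∀ j, 0 < k j)
    (ε : Fin n → ℤ) (hε : ∀ j, ε j = 1 ∨ ε j = -1)
    (r : Fin n → ℚ) (hr : ∀ j, r j = (ε j : ℚ) * (p : ℚ) ^ (-(k j : ℤ)))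
    (hsum : ∑ j, (r j) ^ 2 = 1)
    (σ : ℝ) (hσ : 0 ≤ σ)
    (E : AddSubgroup ℚ) (hEY : E ≤ Y)
    (hEp : ∀ y : ℚ, y ∈ Y → (y ∈ E ↔ (p : ℚ) * y ∈ E))
    (f : Y → ℝ)
    (hfE : ∀ y : Y, (y : ℚ) ∈ E → f y = Real.exp (-σ * (((y : ℚ) : ℝ)) ^ 2))
    (hf0 : ∀ y : Y, (y : ℚ) ∉ E → f y = 0)
    (hmem : ∀ (j : Fin n) (y : Y), r j * (y : ℚ) ∈ Y) :
    IsPositiveDefinite (fun y : Y => (f y : ℂ)) ∧ f 0 = 1 ∧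
      ∀ y : Y, f y = ∏ j, f ⟨r j * (y : ℚ), hmem j y⟩ :=
  gauss_haar_satisfies_polya_equation_general p hp Y n hn k ε hε r hr hsum σ hσ E hEp f hfE hf0 hmem
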